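/- (GCES satisfies DUM.) For every probabilistic database p over D with endogenous/exogenous partition (D^en, D^ex), every Boolean query Q : Finset D → {0,1}, and every τ ∈ D^en: if Δ(Q,W,τ) = 0 for every W ⊆ D^en \ {τ}, then CE(p,Q,τ) = 0. -/

import Mathlib

/-! Both interventions are push-forwards of `p`, so `CE(p,Q,τ)` is the expectation of
`Q[W ∪ {τ}] − Q[W \ {τ}]` under `p`. Only worlds containing `D^ex` carry mass, and for those
this difference is `Δ(Q,V,τ)` with `V` the endogenous part of `W` without `τ`. -/

open Finset

variable {α : Type*} [DecidableEq α]

/-- The positively intervened distribution `p^{+τ}`: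
`p^{+τ}(W) = Σ_{W' ⊆ D, W' ∪ {τ} = W} p(W')`. -/
noncomputable def pPlus (D : Finset α) (p : Finset α → ℝ) (τ : α) (W : Finset α) : ℝ :=
  ∑ W' ∈ D.powerset.filter (fun W' => W' ∪ {τ} = W), p W'

/-- The negatively intervened distribution `p^{−τ}`:
`p^{−τ}(W) = Σ_{W' ⊆ D, W' \ {τ} = W} p(W')`. -/
noncomputable def pMinus (D : Finset α) (p : Finset α → ℝ) (τ : α) (W : Finset α) : ℝ :=
  ∑ W' ∈ D.powerset.filter (fun W' => W' \ {τ} = W), p W'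

/-- The generalized causal-effect score of tuple `τ` for query `Q` on the PDB `p` over `D`:
`CE(p,Q,τ) = Σ_{W ⊆ D} p^{+τ}(W)·Q[W] − Σ_{W ⊆ D} p^{−τ}(W)·Q[W]`. -/
noncomputable def CE (D : Finset α) (p : Finset α → ℝ) (Q : Finset α → ℝ) (τ : α) : ℝ :=
  ∑ W ∈ D.powerset, pPlus D p τ W * Q W - ∑ W ∈ D.powerset, pMinus D p τ W * Q W

/-- `Δ(Q,W,τ) = Q[W ∪ D^ex ∪ {τ}] − Q[W ∪ D^ex]`. -/
noncomputable def Delta (Dex : Finset α) (Q : Finset α → ℝ) (W : Finset α) (τ : α) : ℝ :=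
  Q (W ∪ Dex ∪ {τ}) - Q (W ∪ Dex)

theorem sum_sum_filter_mul_eq_sum_mul {β γ : Type*} [DecidableEq γ] {s : Finset β}
    {t : Finset γ} {g : β → γ} (hg : ∀ x ∈ s, g x ∈ t) (p : β → ℝ) (f : γ → ℝ) :
    ∑ y ∈ t, (∑ x ∈ s.filter (fun x => g x = y), p x) * f y = ∑ x ∈ s, p x * f (g x) := by
  rw [← sum_fiberwise_of_maps_to hg]
  refine sum_congr rfl fun y _ => ?_
  rw [sum_mul]
  exact sum_congr rfl fun x hx => by rw [(mem_filter.mp hx).2]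

theorem sum_pPlus_mul {D : Finset α} {τ : α} (hτ : τ ∈ D) (p f : Finset α → ℝ) :
    ∑ W ∈ D.powerset, pPlus D p τ W * f W = ∑ W ∈ D.powerset, p W * f (W ∪ {τ}) :=
  sum_sum_filter_mul_eq_sum_mul
    (fun _ hW => mem_powerset.mpr
      (union_subset (mem_powerset.mp hW) (singleton_subset_iff.mpr hτ))) p f

theorem sum_pMinus_mul (D : Finset α) (τ : α) (p f : Finset α → ℝ) :
    ∑ W ∈ D.powerset, pMinus D p τ W * f W = ∑ W ∈ D.powerset, p W * f (W \ {τ}) :=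
  sum_sum_filter_mul_eq_sum_mul
    (fun _ hW => mem_powerset.mpr (sdiff_subset.trans (mem_powerset.mp hW))) p f

theorem CE_eq_sum_mul_sub {D : Finset α} {τ : α} (hτ : τ ∈ D) (p Q : Finset α → ℝ) :
    CE D p Q τ = ∑ W ∈ D.powerset, p W * (Q (W ∪ {τ}) - Q (W \ {τ})) := by
  simp only [CE, sum_pPlus_mul hτ, sum_pMinus_mul, mul_sub, sum_sub_distrib]

theorem Delta_sdiff_erase {Dex W : Finset α} {τ : α} (hex : Dex ⊆ W) (hτ : τ ∉ Dex)
    (Q : Finset α → ℝ) :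
    Delta Dex Q ((W \ Dex).erase τ) τ = Q (W ∪ {τ}) - Q (W \ {τ}) := by
  have hminus : (W \ Dex).erase τ ∪ Dex = W \ {τ} := by
    ext x
    by_cases hx : x = τ
    · subst hx; simp [hτ]
    · simp only [mem_union, mem_erase, mem_sdiff, mem_singleton, hx]
      have := @hex x
      tauto
  rw [Delta, hminus, sdiff_union_self_eq_union]

theorem stmt3_general (D Den Dex : Finset α)
    (hunion : Den ∪ Dex = D) (hdisj : Disjoint Den Dex)
    (p : Finset α → ℝ)
    (hexo : ∀ W ∈ D.powerset, ¬ Dex ⊆ W → p W = 0)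
    (Q : Finset α → ℝ)
    (τ : α) (hτ : τ ∈ Den)
    (hdum : ∀ W ⊆ Den.erase τ, Delta Dex Q W τ = 0) :
    CE D p Q τ = 0 := by
  rw [CE_eq_sum_mul_sub (hunion ▸ mem_union_left Dex hτ)]
  refine sum_eq_zero fun W hW => ?_
  by_cases hex : Dex ⊆ W
  · have hWD : W ⊆ Den ∪ Dex := hunion ▸ mem_powerset.mp hW
    have hendo : (W \ Dex).erase τ ⊆ Den.erase τ := erase_subset_erase τ (sdiff_le_iff'.mpr hWD)
    rw [← Delta_sdiff_erase hex (disjoint_left.mp hdisj hτ), hdum _ hendo, mul_zero]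
  · rw [hexo W hW hex, zero_mul]

/-- (GCES satisfies DUM.) For any PDB `p` over `D = D^en ∪ D^ex` (vanishing on worlds
not containing `D^ex`), any Boolean query `Q`, and any endogenous tuple `τ`:
if `Δ(Q,W,τ) = 0` for every `W ⊆ D^en \ {τ}`, then `CE(p,Q,τ) = 0`. -/
theorem stmt3 (D Den Dex : Finset α)
    (hunion : Den ∪ Dex = D) (hdisj : Disjoint Den Dex)
    (p : Finset α → ℝ)
    (hp0 : ∀ W ∈ D.powerset, 0 ≤ p W)
    (hp1 : ∑ W ∈ D.powerset, p W = 1)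
    (hexo : ∀ W ∈ D.powerset, ¬ Dex ⊆ W → p W = 0)
    (Q : Finset α → ℝ) (hBool : ∀ W ⊆ D, Q W = 0 ∨ Q W = 1)
    (τ : α) (hτ : τ ∈ Den)
    (hdum : ∀ W ⊆ Den.erase τ, Delta Dex Q W τ = 0) :
    CE D p Q τ = 0 :=
  stmt3_general D Den Dex hunion hdisj p hexo Q τ hτ hdum
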